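/- Chain rule for divergence applied to sequential sampling: Let p and p̃ be two distributions of a pair (V^{1:N}, X^{1:N}) with the same marginal p_{X^{1:N}}, where p̃_{V^{1:N}|X^{1:N}} factorizes coordinatewise as p̃ = Π_j p̃_{V^j | V^{1:j−1} X^{1:N}}, and suppose the index set {1,…,N} is partitioned into three sets R, S, T such that: for j ∈ S, p̃_{V^j|V^{1:j−1}X^{1:N}} = p_{V^j|V^{1:j−1}X^{1:N}}; for j ∈ T, p̃_{V^j|V^{1:j−1}X^{1:N}} = p_{V^j|V^{1:j−1}}; for j ∈ R, p̃_{V^j|V^{1:j−1}X^{1:N}} is uniform on {0,1}. If additionally 1 − H_p(V^j|V^{1:j−1}X^{1:N}) ≤ δ for j ∈ R and H_p(V^j|V^{1:j−1}) ≤ δ for j ∈ T, then D(p_{X^{1:N}V^{1:N}} ‖ p̃_{X^{1:N}V^{1:N}}) ≤ N·δ. -/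

import Mathlib

open Finset

noncomputable def distOf {Ω α : Type*} [Fintype Ω] [DecidableEq α] (μ : Ω → ℝ) (f : Ω → α) : α → ℝ :=
  fun x => ∑ ω, if f ω = x then μ ω else 0

noncomputable def ent {α : Type*} [Fintype α] (p : α → ℝ) : ℝ :=
  -∑ a, p a * Real.logb 2 (p a)

noncomputable def Hrv {Ω α : Type*} [Fintype Ω] [Fintype α] [DecidableEq α]
    (μ : Ω → ℝ) (f : Ω → α) : ℝ :=
  ent (distOf μ f)

noncomputable def MIrv {Ω α β : Type*} [Fintype Ω] [Fintype α] [Fintype β]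
    [DecidableEq α] [DecidableEq β] (μ : Ω → ℝ) (f : Ω → α) (g : Ω → β) : ℝ :=
  Hrv μ f + Hrv μ g - Hrv μ (fun ω => (f ω, g ω))

noncomputable def condH {Ω α β : Type*} [Fintype Ω] [Fintype α] [Fintype β]
    [DecidableEq α] [DecidableEq β] (μ : Ω → ℝ) (f : Ω → α) (g : Ω → β) : ℝ :=
  Hrv μ (fun ω => (f ω, g ω)) - Hrv μ g

noncomputable def cMI {Ω α β γ : Type*} [Fintype Ω] [Fintype α] [Fintype β] [Fintype γ]
    [DecidableEq α] [DecidableEq β] [DecidableEq γ]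
    (μ : Ω → ℝ) (f : Ω → α) (g : Ω → β) (h : Ω → γ) : ℝ :=
  Hrv μ (fun ω => (f ω, h ω)) + Hrv μ (fun ω => (g ω, h ω))
    - Hrv μ (fun ω => (f ω, g ω, h ω)) - Hrv μ h

def IsPMF {Ω : Type*} [Fintype Ω] (μ : Ω → ℝ) : Prop := (∀ ω, 0 ≤ μ ω) ∧ ∑ ω, μ ω = 1

noncomputable def TV {α : Type*} [Fintype α] (p q : α → ℝ) : ℝ := (1/2) * ∑ a, |p a - q a|

noncomputable def KL {α : Type*} [Fintype α] (p q : α → ℝ) : ℝ :=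
  ∑ a, p a * Real.logb 2 (p a / q a)

/-- Probability that `V` agrees with `v` strictly before index `j` and `X = x`. -/
noncomputable def prefProb (N : ℕ) (q : (Fin N → ZMod 2) × (Fin N → ZMod 2) → ℝ)
    (j : Fin N) (v x : Fin N → ZMod 2) : ℝ :=
  ∑ w, if ∀ i : Fin N, i < j → w i = v i then q (w, x) else 0

/-- Probability that `V` agrees with `v` up to index `j` (inclusive) and `X = x`. -/
noncomputable def prefProbLe (N : ℕ) (q : (Fin N → ZMod 2) × (Fin N → ZMod 2) → ℝ)
    (j : Fin N) (v x : Fin N → ZMod 2) : ℝ :=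
  ∑ w, if ∀ i : Fin N, i ≤ j → w i = v i then q (w, x) else 0

/-- Conditional probability `q(V^j = v^j | V^{1:j-1} = v^{1:j-1}, X = x)`. -/
noncomputable def condP (N : ℕ) (q : (Fin N → ZMod 2) × (Fin N → ZMod 2) → ℝ)
    (j : Fin N) (v x : Fin N → ZMod 2) : ℝ :=
  prefProbLe N q j v x / prefProb N q j v x

/-- Conditional probability `q(V^j = v^j | V^{1:j-1} = v^{1:j-1})` (marginal over `X`). -/
noncomputable def condPm (N : ℕ) (q : (Fin N → ZMod 2) × (Fin N → ZMod 2) → ℝ)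
    (j : Fin N) (v : Fin N → ZMod 2) : ℝ :=
  (∑ x, prefProbLe N q j v x) / (∑ x, prefProb N q j v x)

/-!
Both `p` and `p̃` are the common `X`-marginal times the product of their coordinate
conditionals (for `p` by telescoping prefix masses, for `p̃` by hypothesis), so
`D(p ‖ p̃) = ∑ⱼ Dⱼ` with `Dⱼ = E_p log (p(vʲ | v^{<j}, x) / p̃(vʲ | v^{<j}, x))`. On `S` the ratio
is `1`, so `Dⱼ = 0`; on `R` the uniform conditional gives `Dⱼ = 1 - H_p(Vʲ | V^{<j} X)`; on `T`,
`Dⱼ = H_p(Vʲ | V^{<j}) - H_p(Vʲ | V^{<j} X) ≤ H_p(Vʲ | V^{<j})`. Hence every `Dⱼ ≤ δ`.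
-/

section Entropy

variable {Ω α β : Type*} [Fintype Ω] [Fintype α] [Fintype β] [DecidableEq α] [DecidableEq β]

omit [Fintype α] in
lemma le_distOf_apply {μ : Ω → ℝ} (hμ : ∀ ω, 0 ≤ μ ω) (f : Ω → α) (ω : Ω) :
    μ ω ≤ distOf μ f (f ω) := by
  simpa [distOf] using Finset.single_le_sum (f := fun ω' => if f ω' = f ω then μ ω' else 0)
    (fun ω' _ => by split_ifs <;> simp [hμ ω']) (Finset.mem_univ ω)

lemma sum_distOf_mul (μ : Ω → ℝ) (f : Ω → α) (F : α → ℝ) :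
    ∑ a, distOf μ f a * F a = ∑ ω, μ ω * F (f ω) := by
  simp only [distOf, Finset.sum_mul, ite_mul, zero_mul]
  rw [Finset.sum_comm]
  simp

lemma Hrv_eq_neg_sum_logb (μ : Ω → ℝ) (f : Ω → α) :
    Hrv μ f = -∑ ω, μ ω * Real.logb 2 (distOf μ f (f ω)) := by
  rw [Hrv, ent, sum_distOf_mul μ f fun a => Real.logb 2 (distOf μ f a)]

lemma condH_eq_neg_sum_logb_div {μ : Ω → ℝ} (hμ : ∀ ω, 0 ≤ μ ω) (f : Ω → α) (g : Ω → β) :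
    condH μ f g = -∑ ω, μ ω * Real.logb 2
      (distOf μ (fun ω => (f ω, g ω)) (f ω, g ω) / distOf μ g (g ω)) := by
  rw [condH, Hrv_eq_neg_sum_logb, Hrv_eq_neg_sum_logb, neg_sub_neg, ← Finset.sum_sub_distrib,
    ← Finset.sum_neg_distrib]
  refine Finset.sum_congr rfl fun ω _ => ?_
  rcases (hμ ω).eq_or_lt with h0 | h0
  · simp [← h0]
  · have hfg := h0.trans_le (le_distOf_apply hμ (fun ω => (f ω, g ω)) ω)
    have hg := h0.trans_le (le_distOf_apply hμ g ω)
    rw [Real.logb_div hfg.ne' hg.ne']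
    ring

end Entropy

section Marginals

variable {A B γ : Type*} [Fintype A] [Fintype B] [DecidableEq γ]

lemma distOf_eq_sum_of_iff (μ : A × B → ℝ) (h : A × B → γ) (c : γ) (P : A → Prop)
    [DecidablePred P] (hP : ∀ a b, h (a, b) = c ↔ P a) :
    distOf μ h c = ∑ b, ∑ a, if P a then μ (a, b) else 0 := by
  simp only [distOf, Fintype.sum_prod_type, hP]
  exact Finset.sum_comm

lemma distOf_eq_sum_of_iff_and_eq (μ : A × B → ℝ) (h : A × B → γ) (c : γ) (P : A → Prop)
    [DecidablePred P] (x : B) (hP : ∀ a b, h (a, b) = c ↔ P a ∧ b = x) :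
    distOf μ h c = ∑ a, if P a then μ (a, x) else 0 := by
  classical
  simp only [distOf, Fintype.sum_prod_type, hP, ite_and]
  simp

end Marginals

lemma KL_eq_sum_sum_of_div_eq_prod {Ω ι : Type*} [Fintype Ω] [Fintype ι] {p q : Ω → ℝ}
    (r : ι → Ω → ℝ) (hr : ∀ i ω, p ω ≠ 0 → r i ω ≠ 0)
    (hpq : ∀ ω, p ω ≠ 0 → p ω / q ω = ∏ i, r i ω) :
    KL p q = ∑ i, ∑ ω, p ω * Real.logb 2 (r i ω) := by
  rw [KL, Finset.sum_comm]
  refine Finset.sum_congr rfl fun ω _ => ?_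
  by_cases h0 : p ω = 0
  · simp [h0]
  · rw [hpq ω h0, ← Finset.mul_sum]
    simp only [Real.logb, Real.log_prod fun i _ => hr i ω h0, Finset.sum_div]

lemma prod_range_succ_div_of_ne_zero {K : Type*} [CommGroupWithZero K] (f : ℕ → K)
    (hf : ∀ k, f k ≠ 0) (n : ℕ) : ∏ k ∈ Finset.range n, f (k + 1) / f k = f n / f 0 := by
  induction n with
  | zero => simp [div_self (hf 0)]
  | succ n ih =>
    rw [Finset.prod_range_succ, ih, div_mul_div_comm, mul_comm (f n)]
    exact mul_div_mul_right _ _ (hf n)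

section Prefix

variable {N : ℕ} (p : (Fin N → ZMod 2) × (Fin N → ZMod 2) → ℝ)

noncomputable def prefixMass (v x : Fin N → ZMod 2) (k : ℕ) : ℝ :=
  ∑ w, if ∀ i : Fin N, (i : ℕ) < k → w i = v i then p (w, x) else 0

lemma prefProb_eq_prefixMass (j : Fin N) (v x : Fin N → ZMod 2) :
    prefProb N p j v x = prefixMass p v x j :=
  rfl

lemma prefProbLe_eq_prefixMass (j : Fin N) (v x : Fin N → ZMod 2) :
    prefProbLe N p j v x = prefixMass p v x (j + 1) := by
  simp only [prefProbLe, prefixMass, Fin.le_def, Nat.lt_succ_iff]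

lemma prefixMass_zero (v x : Fin N → ZMod 2) : prefixMass p v x 0 = ∑ w, p (w, x) := by
  simp [prefixMass]

lemma prefixMass_of_le (v x : Fin N → ZMod 2) {k : ℕ} (hk : N ≤ k) :
    prefixMass p v x k = p (v, x) := by
  have hagree : ∀ w : Fin N → ZMod 2, (∀ i : Fin N, (i : ℕ) < k → w i = v i) ↔ w = v :=
    fun w => ⟨fun h => funext fun i => h i (i.2.trans_le hk), fun h i _ => h ▸ rfl⟩
  simp only [prefixMass, hagree, Finset.sum_ite_eq', Finset.mem_univ, if_true]

variable {p} (hp : ∀ ω, 0 ≤ p ω)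
include hp

lemma prefixMass_nonneg (v x : Fin N → ZMod 2) (k : ℕ) : 0 ≤ prefixMass p v x k :=
  Finset.sum_nonneg fun w _ => by split_ifs <;> simp [hp]

lemma prefixMass_antitone (v x : Fin N → ZMod 2) : Antitone (prefixMass p v x) := by
  intro k l hkl
  refine Finset.sum_le_sum fun w _ => ?_
  by_cases hw : ∀ i : Fin N, (i : ℕ) < l → w i = v i
  · rw [if_pos hw, if_pos fun i hi => hw i (hi.trans_le hkl)]
  · rw [if_neg hw]
    split_ifs <;> simp [hp]

lemma prefixMass_pos {v x : Fin N → ZMod 2} (hvx : 0 < p (v, x)) (k : ℕ) :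
    0 < prefixMass p v x k := by
  rcases le_total k N with hk | hk
  · exact (prefixMass_of_le p v x le_rfl ▸ hvx).trans_le (prefixMass_antitone hp v x hk)
  · exact prefixMass_of_le p v x hk ▸ hvx

end Prefix

section Conditionals

variable {N : ℕ} (p : (Fin N → ZMod 2) × (Fin N → ZMod 2) → ℝ)

lemma condP_eq_div_prefixMass (j : Fin N) (v x : Fin N → ZMod 2) :
    condP N p j v x = prefixMass p v x (j + 1) / prefixMass p v x j := by
  rw [condP, prefProbLe_eq_prefixMass, prefProb_eq_prefixMass]

lemma prefix_eq_iff (j : Fin N) (w v : Fin N → ZMod 2) :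
    (fun i : {i : Fin N // i < j} => w i.1) = (fun i => v i.1) ↔
      ∀ i : Fin N, i < j → w i = v i := by
  simp [funext_iff]

lemma coord_prefix_eq_iff (j : Fin N) (w v : Fin N → ZMod 2) :
    (w j = v j ∧ (fun i : {i : Fin N // i < j} => w i.1) = (fun i => v i.1)) ↔
      ∀ i : Fin N, i ≤ j → w i = v i := by
  simp only [prefix_eq_iff, le_iff_lt_or_eq, or_imp, forall_and, forall_eq, and_comm]

lemma distOf_prefix_snd_eq_prefProb (j : Fin N) (v x : Fin N → ZMod 2) :
    distOf p (fun ω => ((fun i : {i : Fin N // i < j} => ω.1 i.1), ω.2))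
      ((fun i : {i : Fin N // i < j} => v i.1), x) = prefProb N p j v x :=
  distOf_eq_sum_of_iff_and_eq p _ _ _ x fun w _ => by simp only [Prod.mk.injEq, prefix_eq_iff]

lemma distOf_coord_prefix_snd_eq_prefProbLe (j : Fin N) (v x : Fin N → ZMod 2) :
    distOf p (fun ω => (ω.1 j, (fun i : {i : Fin N // i < j} => ω.1 i.1), ω.2))
      (v j, (fun i : {i : Fin N // i < j} => v i.1), x) = prefProbLe N p j v x :=
  distOf_eq_sum_of_iff_and_eq p _ _ _ x fun w _ => by
    simp only [Prod.mk.injEq, ← and_assoc, coord_prefix_eq_iff]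

lemma distOf_prefix_eq_sum_prefProb (j : Fin N) (v : Fin N → ZMod 2) :
    distOf p (fun ω => fun i : {i : Fin N // i < j} => ω.1 i.1)
      (fun i : {i : Fin N // i < j} => v i.1) = ∑ x, prefProb N p j v x :=
  distOf_eq_sum_of_iff p _ _ _ fun w _ => prefix_eq_iff j w v

lemma distOf_coord_prefix_eq_sum_prefProbLe (j : Fin N) (v : Fin N → ZMod 2) :
    distOf p (fun ω => (ω.1 j, fun i : {i : Fin N // i < j} => ω.1 i.1))
      (v j, fun i : {i : Fin N // i < j} => v i.1) = ∑ x, prefProbLe N p j v x :=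
  distOf_eq_sum_of_iff p _ _ _ fun w _ => by simp only [Prod.mk.injEq, coord_prefix_eq_iff]

variable {p} (hp : ∀ ω, 0 ≤ p ω)
include hp

lemma condH_eq_neg_sum_logb_condP (j : Fin N) :
    condH p (fun ω => ω.1 j) (fun ω => ((fun i : {i : Fin N // i < j} => ω.1 i.1), ω.2)) =
      -∑ ω, p ω * Real.logb 2 (condP N p j ω.1 ω.2) := by
  simp only [condH_eq_neg_sum_logb_div hp, distOf_coord_prefix_snd_eq_prefProbLe,
    distOf_prefix_snd_eq_prefProb, condP]

lemma condH_eq_neg_sum_logb_condPm (j : Fin N) :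
    condH p (fun ω => ω.1 j) (fun ω => fun i : {i : Fin N // i < j} => ω.1 i.1) =
      -∑ ω, p ω * Real.logb 2 (condPm N p j ω.1) := by
  simp only [condH_eq_neg_sum_logb_div hp, distOf_coord_prefix_eq_sum_prefProbLe,
    distOf_prefix_eq_sum_prefProb, condPm]

variable {v x : Fin N → ZMod 2} (hvx : 0 < p (v, x))
include hvx

lemma condP_pos (j : Fin N) : 0 < condP N p j v x := by
  rw [condP_eq_div_prefixMass]
  exact div_pos (prefixMass_pos hp hvx _) (prefixMass_pos hp hvx _)

lemma condP_le_one (j : Fin N) : condP N p j v x ≤ 1 := by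
  rw [condP_eq_div_prefixMass, div_le_one (prefixMass_pos hp hvx _)]
  exact prefixMass_antitone hp v x (Nat.le_succ j)

lemma condPm_pos (j : Fin N) : 0 < condPm N p j v := by
  have hx : 0 < prefProbLe N p j v x := by
    rw [prefProbLe_eq_prefixMass]
    exact prefixMass_pos hp hvx _
  have hLe : 0 < ∑ y, prefProbLe N p j v y := hx.trans_le <| Finset.single_le_sum
    (fun y _ => by rw [prefProbLe_eq_prefixMass]; exact prefixMass_nonneg hp v y _)
    (Finset.mem_univ x)
  refine div_pos hLe (hLe.trans_le (Finset.sum_le_sum fun y _ => ?_))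
  rw [prefProbLe_eq_prefixMass, prefProb_eq_prefixMass]
  exact prefixMass_antitone hp v y (Nat.le_succ j)

/-- The chain rule, by telescoping `prefixMass` from `0` to `N`. -/
lemma sum_mul_prod_condP : (∑ w, p (w, x)) * ∏ j, condP N p j v x = p (v, x) := by
  have hne k := (prefixMass_pos hp hvx k).ne'
  calc (∑ w, p (w, x)) * ∏ j, condP N p j v x
      = prefixMass p v x 0 *
          ∏ k ∈ Finset.range N, prefixMass p v x (k + 1) / prefixMass p v x k := by
        rw [prefixMass_zero,
          ← Fin.prod_univ_eq_prod_range (fun k => prefixMass p v x (k + 1) / prefixMass p v x k)]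
        simp only [condP_eq_div_prefixMass]
    _ = p (v, x) := by
        rw [prod_range_succ_div_of_ne_zero _ hne, mul_div_cancel₀ _ (hne 0),
          prefixMass_of_le p v x le_rfl]

end Conditionals

section Divergence

variable {N : ℕ} {p : (Fin N → ZMod 2) × (Fin N → ZMod 2) → ℝ}

lemma div_eq_prod_condP_div {p' : (Fin N → ZMod 2) × (Fin N → ZMod 2) → ℝ}
    (hp : ∀ ω, 0 ≤ p ω) (hmarg : ∀ x, ∑ v, p (v, x) = ∑ v, p' (v, x))
    (hfact : ∀ v x, p' (v, x) = (∑ w, p' (w, x)) * ∏ j, condP N p' j v x)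
    {v x : Fin N → ZMod 2} (hvx : 0 < p (v, x)) :
    p (v, x) / p' (v, x) = ∏ j, condP N p j v x / condP N p' j v x := by
  have hx : 0 < ∑ w, p (w, x) := prefixMass_zero p v x ▸ prefixMass_pos hp hvx 0
  rw [← sum_mul_prod_condP hp hvx, hfact, ← hmarg, mul_div_mul_left _ _ hx.ne',
    Finset.prod_div_distrib]

lemma sum_mul_logb_condP_div_half (hp : IsPMF p) (j : Fin N) :
    ∑ ω, p ω * Real.logb 2 (condP N p j ω.1 ω.2 / (1 / 2)) =
      1 - condH p (fun ω => ω.1 j) (fun ω => ((fun i : {i : Fin N // i < j} => ω.1 i.1), ω.2)) := by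
  have hterm (ω : (Fin N → ZMod 2) × (Fin N → ZMod 2)) :
      p ω * Real.logb 2 (condP N p j ω.1 ω.2 / (1 / 2)) =
        p ω + p ω * Real.logb 2 (condP N p j ω.1 ω.2) := by
    rcases (hp.1 ω).eq_or_lt with h0 | h0
    · simp [← h0]
    · rw [Real.logb_div (condP_pos hp.1 h0 j).ne' (by norm_num), one_div, Real.logb_inv,
        Real.logb_self_eq_one one_lt_two]
      ring
  rw [condH_eq_neg_sum_logb_condP hp.1, sub_neg_eq_add, Finset.sum_congr rfl fun ω _ => hterm ω,
    Finset.sum_add_distrib, hp.2]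

lemma sum_mul_logb_condP_div_condPm_le (hp : ∀ ω, 0 ≤ p ω) (j : Fin N) :
    ∑ ω, p ω * Real.logb 2 (condP N p j ω.1 ω.2 / condPm N p j ω.1) ≤
      condH p (fun ω => ω.1 j) (fun ω => fun i : {i : Fin N // i < j} => ω.1 i.1) := by
  rw [condH_eq_neg_sum_logb_condPm hp, ← Finset.sum_neg_distrib]
  refine Finset.sum_le_sum fun ω _ => ?_
  rcases (hp ω).eq_or_lt with h0 | h0
  · simp [← h0]
  · have hc := condP_pos hp h0 j
    have hlog : Real.logb 2 (condP N p j ω.1 ω.2) ≤ 0 :=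
      Real.logb_nonpos one_lt_two hc.le (condP_le_one hp h0 j)
    rw [Real.logb_div hc.ne' (condPm_pos hp h0 j).ne', mul_sub]
    nlinarith

end Divergence

theorem divergence_of_sequential_sampling_general (N : ℕ) (δ : ℝ) (hδ : 0 < δ)
    (p p' : (Fin N → ZMod 2) × (Fin N → ZMod 2) → ℝ)
    (hp : IsPMF p)
    (hmarg : ∀ x, ∑ v, p (v, x) = ∑ v, p' (v, x))
    (R S T : Finset (Fin N))
    (hcover : R ∪ S ∪ T = Finset.univ)
    (hfact : ∀ v x, p' (v, x) = (∑ w, p' (w, x)) * ∏ j, condP N p' j v x)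
    (hS : ∀ j ∈ S, ∀ v x, condP N p' j v x = condP N p j v x)
    (hT : ∀ j ∈ T, ∀ v x, condP N p' j v x = condPm N p j v)
    (hR : ∀ j ∈ R, ∀ v x, condP N p' j v x = 1 / 2)
    (hRent : ∀ j ∈ R, 1 - condH p (fun ω => ω.1 j)
        (fun ω => ((fun i : {i : Fin N // i < j} => ω.1 i.1), ω.2)) ≤ δ)
    (hTent : ∀ j ∈ T, condH p (fun ω => ω.1 j)
        (fun ω => fun i : {i : Fin N // i < j} => ω.1 i.1) ≤ δ) :
    KL p p' ≤ N * δ := by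
  have hmem (j : Fin N) : j ∈ R ∨ j ∈ S ∨ j ∈ T := by
    have hj := Finset.mem_univ j
    rw [← hcover] at hj
    simpa only [Finset.mem_union, or_assoc] using hj
  have hcondP'_pos (j : Fin N) {ω} (hω : 0 < p ω) : 0 < condP N p' j ω.1 ω.2 := by
    rcases hmem j with hj | hj | hj
    · rw [hR j hj]; norm_num
    · rw [hS j hj]; exact condP_pos hp.1 hω j
    · rw [hT j hj]; exact condPm_pos hp.1 hω j
  have hsupp {ω} (hω : p ω ≠ 0) : 0 < p ω := (hp.1 ω).lt_of_ne' hω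
  rw [KL_eq_sum_sum_of_div_eq_prod (fun j ω => condP N p j ω.1 ω.2 / condP N p' j ω.1 ω.2)
    (fun j ω hω => (div_pos (condP_pos hp.1 (hsupp hω) j) (hcondP'_pos j (hsupp hω))).ne')
    (fun ω hω => div_eq_prod_condP_div (v := ω.1) (x := ω.2) hp.1 hmarg hfact (hsupp hω))]
  refine (Finset.sum_le_card_nsmul _ _ δ fun j _ => ?_).trans (by simp)
  rcases hmem j with hj | hj | hj
  · simp only [hR j hj]
    linarith [sum_mul_logb_condP_div_half hp j, hRent j hj]
  · refine (Finset.sum_eq_zero fun ω _ => ?_).trans_le hδ.le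
    rcases eq_or_ne (condP N p j ω.1 ω.2) 0 with hc | hc <;> simp [hS j hj, hc]
  · simp only [hT j hj]
    exact (sum_mul_logb_condP_div_condPm_le hp.1 j).trans (hTent j hj)

/-- chain rule for divergence applied to sequential sampling:
if `p̃` has the same `X`-marginal as `p`, its conditionals coincide with those of `p` on `S`,
are the `X`-free conditionals of `p` on `T`, and are uniform on `R`, and moreover
`1 − H_p(V^j|V^{1:j-1} X) ≤ δ` on `R` and `H_p(V^j|V^{1:j-1}) ≤ δ` on `T`, then
`D(p ‖ p̃) ≤ N δ`. -/
theorem divergence_of_sequential_sampling (N : ℕ) (δ : ℝ) (hδ : 0 < δ)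
    (p p' : (Fin N → ZMod 2) × (Fin N → ZMod 2) → ℝ)
    (hp : IsPMF p) (hp' : IsPMF p')
    (hmarg : ∀ x, ∑ v, p (v, x) = ∑ v, p' (v, x))
    (R S T : Finset (Fin N))
    (hRS : Disjoint R S) (hRT : Disjoint R T) (hST : Disjoint S T)
    (hcover : R ∪ S ∪ T = Finset.univ)
    (hfact : ∀ v x, p' (v, x) = (∑ w, p' (w, x)) * ∏ j, condP N p' j v x)
    (hS : ∀ j ∈ S, ∀ v x, condP N p' j v x = condP N p j v x)
    (hT : ∀ j ∈ T, ∀ v x, condP N p' j v x = condPm N p j v)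
    (hR : ∀ j ∈ R, ∀ v x, condP N p' j v x = 1 / 2)
    (hRent : ∀ j ∈ R, 1 - condH p (fun ω => ω.1 j)
        (fun ω => ((fun i : {i : Fin N // i < j} => ω.1 i.1), ω.2)) ≤ δ)
    (hTent : ∀ j ∈ T, condH p (fun ω => ω.1 j)
        (fun ω => fun i : {i : Fin N // i < j} => ω.1 i.1) ≤ δ) :
    KL p p' ≤ N * δ :=
  divergence_of_sequential_sampling_general N δ hδ p p' hp hmarg R S T hcover hfact hS hT hR hRent
    hTent
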